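/- For every a ∈ ℂ and b ∈ ℝ, the formal vector fields satisfy [L, S] = a·U, [L̄, S̄] = conj(a)·U, [L, S̄] = (2b/3)·U, and [L̄, S] = (2b/3)·U, where [·,·] is the formal Lie bracket. (In particular [L, S] = 12a·∂/∂u₄.) -/
import Mathlib


open ComplexConjugate MvPolynomial

noncomputable section

/-- The polynomial ring `ℂ[z, z̄]` in two independent commuting indeterminates:
variable `0` is `z` and variable `1` is `z̄`. -/
abbrev PZ : Type := MvPolynomial (Fin 2) ℂ

/-- The indeterminate `z`. -/
def Zv : PZ := X 0

/-- The indeterminate `z̄`. -/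
def Zb : PZ := X 1

/-- A formal vector field: a 6-tuple of polynomials, thought of as
`Xᶻ ∂/∂z + X^z̄ ∂/∂z̄ + X¹ ∂/∂u₁ + X² ∂/∂u₂ + X³ ∂/∂u₃ + X⁴ ∂/∂u₄`. -/
abbrev VecF : Type := Fin 6 → PZ

/-- The formal Lie bracket of two formal vector fields (whose coefficients only involve
`z` and `z̄`). -/
def bracket (Xf Yf : VecF) : VecF := fun c =>
  Xf 0 * pderiv 0 (Yf c) + Xf 1 * pderiv 1 (Yf c)
    - (Yf 0 * pderiv 0 (Xf c) + Yf 1 * pderiv 1 (Xf c))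

/-- `L = ∂/∂z + i z̄ ∂/∂u₁ + (2i z z̄ + i z̄²) ∂/∂u₂ + (2 z z̄ − z̄²) ∂/∂u₃
      + (3i a z² z̄ + i ā z̄³ + 2i b z z̄²) ∂/∂u₄`. -/
def Lf (a : ℂ) (b : ℝ) : VecF :=
  ![1, 0, C Complex.I * Zb,
    C (2 * Complex.I) * Zv * Zb + C Complex.I * Zb ^ 2,
    2 * Zv * Zb - Zb ^ 2,
    C (3 * Complex.I * a) * Zv ^ 2 * Zb + C (Complex.I * conj a) * Zb ^ 3 +
      C (2 * Complex.I * (b : ℂ)) * Zv * Zb ^ 2]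

/-- `L̄`, the conjugate of `L`. -/
def Lbf (a : ℂ) (b : ℝ) : VecF :=
  ![0, 1, C (-Complex.I) * Zv,
    C (-2 * Complex.I) * Zv * Zb + C (-Complex.I) * Zv ^ 2,
    2 * Zv * Zb - Zv ^ 2,
    C (-Complex.I * a) * Zv ^ 3 + C (-3 * Complex.I * conj a) * Zv * Zb ^ 2 +
      C (-2 * Complex.I * (b : ℂ)) * Zv ^ 2 * Zb]

/-- `T = 2 ∂/∂u₁ + 4(z + z̄) ∂/∂u₂ − 4i(z − z̄) ∂/∂u₃ + (6a z² + 6ā z̄² + 8b z z̄) ∂/∂u₄`. -/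
def Tf (a : ℂ) (b : ℝ) : VecF :=
  ![0, 0, 2, 4 * (Zv + Zb), C (-4 * Complex.I) * (Zv - Zb),
    C (6 * a) * Zv ^ 2 + C (6 * conj a) * Zb ^ 2 + C (8 * (b : ℂ)) * Zv * Zb]

/-- `S = 4 ∂/∂u₂ − 4i ∂/∂u₃ + (12a z + 8b z̄) ∂/∂u₄`. -/
def Sf (a : ℂ) (b : ℝ) : VecF :=
  ![0, 0, 0, 4, C (-4 * Complex.I), C (12 * a) * Zv + C (8 * (b : ℂ)) * Zb]

/-- `S̄ = 4 ∂/∂u₂ + 4i ∂/∂u₃ + (12ā z̄ + 8b z) ∂/∂u₄`. -/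
def Sbf (a : ℂ) (b : ℝ) : VecF :=
  ![0, 0, 0, 4, C (4 * Complex.I), C (12 * conj a) * Zb + C (8 * (b : ℂ)) * Zv]

/-- `U = 12 ∂/∂u₄`. -/
def Uf : VecF := ![0, 0, 0, 0, 0, 12]


lemma vec6_apply_five {α : Type*} (x0 x1 x2 x3 x4 x5 : α) :
    (![x0, x1, x2, x3, x4, x5] : Fin 6 → α) 5 = x5 := rfl

lemma pderiv_ofNat (i : Fin 2) (n : ℕ) [n.AtLeastTwo] :
    pderiv i (no_index (OfNat.ofNat n) : PZ) = 0 := by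
  rw [← map_ofNat (C : ℂ →+* PZ) n]; simp

set_option maxHeartbeats 1000000 in
/-- `[L, S] = a·U`, `[L̄, S̄] = conj(a)·U`, `[L, S̄] = (2b/3)·U` and
`[L̄, S] = (2b/3)·U`; in particular `[L, S] = 12a ∂/∂u₄`. -/
theorem bracket_length_four (a : ℂ) (b : ℝ) :
    bracket (Lf a b) (Sf a b) = (fun c => C a * Uf c) ∧
    bracket (Lbf a b) (Sbf a b) = (fun c => C (conj a) * Uf c) ∧
    bracket (Lf a b) (Sbf a b) = (fun c => C (2 * (b : ℂ) / 3) * Uf c) ∧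
    bracket (Lbf a b) (Sf a b) = (fun c => C (2 * (b : ℂ) / 3) * Uf c) := by
  refine ⟨?_, ?_, ?_, ?_⟩ <;> funext c <;> fin_cases c <;>
    simp [bracket, Lf, Lbf, Sf, Sbf, Uf, Zv, Zb, vec6_apply_five, pderiv_ofNat,
      Pi.single_eq_of_ne (by decide : (1 : Fin 2) ≠ 0),
      Pi.single_eq_of_ne (by decide : (0 : Fin 2) ≠ 1), map_ofNat,
      mul_comm, mul_left_comm, mul_assoc]
  all_goals rw [← map_ofNat (C : ℂ →+* PZ) 8, ← map_ofNat (C : ℂ →+* PZ) 12, ← C_mul, ← C_mul]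
  all_goals exact congrArg C (by ring)
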